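/- Let d ≥ 1, L > 0, θ ≥ 1, let X ⊆ ℝ^d be nonempty, closed and convex, let f : ℝ^d → ℝ be convex and L-Lipschitz, let x₀, x★ ∈ X, r_ε > 0, and let (g_k)_{k≥0} be vectors in ℝ^d with g₀ ≠ 0 and ‖g_k‖ ≤ Ld for all k. Define recursively r̄_k = max(r_ε, max_{j≤k} ‖x_j − x₀‖), G_k = Σ_{i=0}^{k} ‖g_i‖², η_k = r̄_k/√(G_k), μ_k = r̄_k √(d/(k+1)), and x_{k+1} = Π_X(x_k − η_k g_k). Set Δ_k = ∇f_{μ_k}(x_k) − g_k, s₀ = ‖x₀ − x★‖, s̄_t = max_{k≤t} ‖x_k − x★‖, and x̄_t = (Σ_{k=0}^{t−1} r̄_k)^{−1} Σ_{k=0}^{t−1} r̄_k x_k. Fix t ≥ 1 and assume |Σ_{k=0}^{t−1} r̄_k ⟨Δ_k, x_k − x★⟩| ≤ 8 r̄_{t−1} s̄_{t−1} √(θ G_{t−1} + 4 L² d² θ²). Then f(x̄_t) − f(x★) ≤ 16 θ (r̄_t + s₀)(√(G_{t−1}) + L d + L √(d t)) / (Σ_{k=0}^{t−1} r̄_k / r̄_t).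 -/

import Mathlib

open MeasureTheory Metric Finset
open scoped RealInnerProductSpace

/-- The uniform probability measure on the closed Euclidean unit ball in `ℝ^d`. -/
noncomputable def ballUniform (d : ℕ) : Measure (EuclideanSpace ℝ (Fin d)) :=
  (volume (Metric.closedBall (0 : EuclideanSpace ℝ (Fin d)) 1))⁻¹ •
    volume.restrict (Metric.closedBall 0 1)

/-- The ball-smoothed function `f_μ(x) = E_{u ∼ U(B^d)} [f (x + μ u)]`. -/
noncomputable def smoothed (d : ℕ) (f : EuclideanSpace ℝ (Fin d) → ℝ) (μ : ℝ)
    (x : EuclideanSpace ℝ (Fin d)) : ℝ :=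
  ∫ u, f (x + μ • u) ∂(ballUniform d)

/-- The uniform (rotation-invariant) probability measure on the unit sphere `S^{d-1}`,
realized as the pushforward of the uniform measure on the unit ball under radial
normalization `u ↦ u / ‖u‖`. -/
noncomputable def sphereUniform (d : ℕ) : Measure (EuclideanSpace ℝ (Fin d)) :=
  (ballUniform d).map (fun u => ‖u‖⁻¹ • u)

/-!
Smoothing changes `f` by at most `L μ_k`, and `f_{μ_k}` is convex and differentiable, so
`f(x_k) - f(x★) ≤ ⟨∇f_{μ_k}(x_k), x_k - x★⟩ + 2 L μ_k`. Writing `∇f_{μ_k}(x_k) = g_k + Δ_k`,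
the `g_k`-part is the regret of projected gradient descent with the step sizes
`η_k = r̄_k / √G_k`: nonexpansiveness of the projection towards `x★` gives
`2 η_k ⟨g_k, x_k - x★⟩ ≤ ‖x_k - x★‖² - ‖x_{k+1} - x★‖² + η_k² ‖g_k‖²`; multiplied by `√G_k`, the
first part is summed by parts (`√G_k` is nondecreasing) and the second by
`Σ ‖g_k‖² / √G_k ≤ 2 √G`, giving `3 √G_{t-1} r̄_t (r̄_t + s₀)`. The `Δ_k`-part is the assumed
noise bound, and `Σ r̄_k μ_k ≤ 2 √(d t) r̄_t²`. Jensen's inequality for the `r̄`-weighted average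
`x̄_t` turns the bound on `Σ r̄_k (f(x_k) - f(x★))` into the claim.
-/

open Real

section RealBounds

lemma sum_range_mul_sub_succ_le {c A : ℕ → ℝ} {P : ℝ} (hc : Monotone c) (hc0 : 0 ≤ c 0)
    (n : ℕ) (hA : ∀ k ≤ n, A k ≤ P) :
    ∑ k ∈ range (n + 1), c k * (A k - A (k + 1)) ≤ c n * (P - A (n + 1)) := by
  induction n with
  | zero => simpa using mul_le_mul_of_nonneg_left (sub_le_sub_right (hA 0 le_rfl) (A 1)) hc0
  | succ n ih =>
    have hprev := ih fun k hk => hA k (by omega)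
    have hgrow := mul_le_mul_of_nonneg_right (hc n.le_succ) (sub_nonneg.2 (hA (n + 1) le_rfl))
    rw [sum_range_succ]
    linarith

lemma div_sqrt_add_le {a b : ℝ} (ha : 0 ≤ a) (hb : 0 ≤ b) :
    b / √(a + b) ≤ 2 * (√(a + b) - √a) := by
  have hpq : √a ≤ √(a + b) := sqrt_le_sqrt (by linarith)
  rcases (sqrt_nonneg (a + b)).eq_or_lt with hq | hq
  · rw [← hq, div_zero]
    linarith [sqrt_nonneg a]
  · rw [div_le_iff₀ hq]
    nlinarith [sq_sqrt ha, sq_sqrt (add_nonneg ha hb)]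

lemma sum_div_sqrt_partialSum_le {b : ℕ → ℝ} (hb : ∀ k, 0 ≤ b k) (n : ℕ) :
    ∑ k ∈ range n, b k / √(∑ i ∈ range (k + 1), b i) ≤ 2 * √(∑ i ∈ range n, b i) :=
  calc ∑ k ∈ range n, b k / √(∑ i ∈ range (k + 1), b i)
      ≤ ∑ k ∈ range n, 2 * (√(∑ i ∈ range (k + 1), b i) - √(∑ i ∈ range k, b i)) :=
        sum_le_sum fun k _ => by
          rw [sum_range_succ]
          exact div_sqrt_add_le (sum_nonneg fun i _ => hb i) (hb k)
    _ = 2 * √(∑ i ∈ range n, b i) := by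
        rw [← mul_sum, sum_range_sub (fun k => √(∑ i ∈ range k, b i))]
        simp

lemma sum_mul_mul_sqrt_div_le {r : ℕ → ℝ} {M d : ℝ} (hd : 0 ≤ d) (t : ℕ)
    (hr : ∀ k < t, 0 ≤ r k ∧ r k ≤ M) :
    ∑ k ∈ range t, r k * (r k * √(d / (k + 1))) ≤ 2 * √(d * t) * M ^ 2 := by
  have hharmonic : ∑ k ∈ range t, 1 / √((k : ℝ) + 1) ≤ 2 * √t := by
    simpa using sum_div_sqrt_partialSum_le (fun _ => zero_le_one) t
  calc ∑ k ∈ range t, r k * (r k * √(d / (k + 1)))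
      ≤ ∑ k ∈ range t, M ^ 2 * √d * (1 / √((k : ℝ) + 1)) := sum_le_sum fun k hk => by
        obtain ⟨hr0, hrM⟩ := hr k (mem_range.1 hk)
        rw [sqrt_div hd, ← mul_assoc, mul_one_div, mul_div_assoc]
        gcongr
        nlinarith
    _ ≤ M ^ 2 * √d * (2 * √t) := by
        rw [← mul_sum]
        gcongr
    _ = 2 * √(d * t) * M ^ 2 := by
        rw [sqrt_mul hd]
        ring

lemma sqrt_mul_add_sq_mul_sq_le {θ G c : ℝ} (hθ : 1 ≤ θ) (hG : 0 ≤ G) (hc : 0 ≤ c) :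
    √(θ * G + c ^ 2 * θ ^ 2) ≤ θ * (√G + c) := by
  rw [sqrt_le_left (by positivity)]
  have hθG : θ * G ≤ θ ^ 2 * G := by nlinarith [mul_nonneg (sub_nonneg.2 hθ) hG]
  nlinarith [sq_sqrt hG, mul_nonneg (mul_nonneg hc (sqrt_nonneg G)) (sq_nonneg θ)]

end RealBounds

section InnerProductSpace

variable {F : Type*} [NormedAddCommGroup F] [InnerProductSpace ℝ F]

lemma ConvexOn.sub_le_inner_gradient [CompleteSpace F] {φ : F → ℝ}
    (hφ : ConvexOn ℝ Set.univ φ) {x : F} (hx : DifferentiableAt ℝ φ x) (y : F) :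
    φ x - φ y ≤ ⟪gradient φ x, x - y⟫ := by
  have hline : HasDerivAt (φ ∘ AffineMap.lineMap (k := ℝ) x y) (fderiv ℝ φ x (y - x)) 0 := by
    have hφx : HasFDerivAt φ (fderiv ℝ φ x) (AffineMap.lineMap x y (0 : ℝ)) := by
      rw [AffineMap.lineMap_apply_zero]
      exact hx.hasFDerivAt
    exact hφx.comp_hasDerivAt 0 AffineMap.hasDerivAt_lineMap
  have hslope := (hφ.comp_affineMap (AffineMap.lineMap x y)).le_slope_of_hasDerivAt
    (Set.mem_univ 0) (Set.mem_univ 1) one_pos hline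
  simp only [slope, Function.comp_apply, AffineMap.lineMap_apply_zero,
    AffineMap.lineMap_apply_one, sub_zero, inv_one, one_mul, vsub_eq_sub, smul_eq_mul] at hslope
  rw [← neg_sub y x, inner_neg_right, inner_gradient_left]
  linarith

lemma Convex.norm_sub_le_of_nearest {X : Set F} (hX : Convex ℝ X) {z p w : F} (hp : p ∈ X)
    (hmin : ∀ y ∈ X, ‖z - p‖ ≤ ‖z - y‖) (hw : w ∈ X) : ‖p - w‖ ≤ ‖z - w‖ := by
  have : Nonempty X := ⟨⟨p, hp⟩⟩
  have hbdd : BddBelow (Set.range fun y : X => ‖z - y‖) :=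
    ⟨0, by rintro _ ⟨y, rfl⟩; positivity⟩
  have hinf : ‖z - p‖ = ⨅ y : X, ‖z - y‖ :=
    le_antisymm (le_ciInf fun y => hmin y y.2) (ciInf_le hbdd ⟨p, hp⟩)
  have hobtuse : ⟪z - p, w - p⟫ ≤ 0 := (norm_eq_iInf_iff_real_inner_le_zero hX hp).1 hinf w hw
  have hsplit : ‖z - w‖ ^ 2 = ‖z - p‖ ^ 2 - 2 * ⟪z - p, w - p⟫ + ‖p - w‖ ^ 2 := by
    rw [show z - w = (z - p) - (w - p) by abel, norm_sub_sq_real, ← norm_neg (w - p), neg_sub]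
  exact (sq_le_sq₀ (norm_nonneg _) (norm_nonneg _)).1 (by nlinarith [sq_nonneg ‖z - p‖])

lemma mul_inner_le_of_norm_sub_le {x x' g w : F} {r S : ℝ} (hS : 0 < S)
    (h : ‖x' - w‖ ≤ ‖x - (r / S) • g - w‖) :
    r * ⟪g, x - w⟫ ≤ S * (‖x - w‖ ^ 2 - ‖x' - w‖ ^ 2) / 2 + r ^ 2 / S * ‖g‖ ^ 2 / 2 := by
  have hsq : ‖x' - w‖ ^ 2 ≤ ‖x - w‖ ^ 2 - 2 * (r / S) * ⟪g, x - w⟫ + (r / S) ^ 2 * ‖g‖ ^ 2 :=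
    calc ‖x' - w‖ ^ 2 ≤ ‖(x - w) - (r / S) • g‖ ^ 2 := by rw [sub_right_comm]; gcongr
      _ = _ := by
        rw [norm_sub_sq_real, inner_smul_right, norm_smul, mul_pow, Real.norm_eq_abs, sq_abs,
          real_inner_comm]
        ring
  have hscale : S / 2 * (‖x - w‖ ^ 2 - 2 * (r / S) * ⟪g, x - w⟫ + (r / S) ^ 2 * ‖g‖ ^ 2) =
      S * ‖x - w‖ ^ 2 / 2 - r * ⟪g, x - w⟫ + r ^ 2 / S * ‖g‖ ^ 2 / 2 := by
    field_simp
  linarith [mul_le_mul_of_nonneg_left hsq (half_pos hS).le]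

end InnerProductSpace

lemma ConvexOn.map_centerMass_sub_le_div {V ι : Type*} [AddCommGroup V] [Module ℝ V]
    {f : V → ℝ} (hf : ConvexOn ℝ Set.univ f) {s : Finset ι} {w : ι → ℝ} (hw : ∀ i ∈ s, 0 < w i)
    (hs : s.Nonempty) {p : ι → V} {y : V} {B R : ℝ}
    (hB : ∑ i ∈ s, w i * (f (p i) - f y) ≤ B * R) :
    f (s.centerMass w p) - f y ≤ B / ∑ i ∈ s, w i / R := by
  have hW : 0 < ∑ i ∈ s, w i := sum_pos hw hs
  have hjensen := hf.map_centerMass_le (fun i hi => (hw i hi).le) hW fun i _ => Set.mem_univ (p i)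
  have hshift : s.centerMass w (f ∘ p) - f y =
      (∑ i ∈ s, w i)⁻¹ * ∑ i ∈ s, w i * (f (p i) - f y) := by
    simp only [centerMass, mul_sub, sum_sub_distrib, ← sum_mul, smul_eq_mul, Function.comp_apply]
    field_simp
  calc f (s.centerMass w p) - f y
      ≤ (∑ i ∈ s, w i)⁻¹ * ∑ i ∈ s, w i * (f (p i) - f y) := by linarith
    _ ≤ (∑ i ∈ s, w i)⁻¹ * (B * R) := by gcongr
    _ = B / ∑ i ∈ s, w i / R := by rw [← sum_div, div_div_eq_mul_div, div_eq_inv_mul]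

section Smoothing

variable {d : ℕ}

local notation "E" => EuclideanSpace ℝ (Fin d)

lemma ballUniform_eq_cond : ballUniform d = ProbabilityTheory.cond volume (closedBall (0 : E) 1) :=
  rfl

instance : IsProbabilityMeasure (ballUniform d) := by
  rw [ballUniform_eq_cond]
  exact ProbabilityTheory.cond_isProbabilityMeasure_of_finite
    (measure_closedBall_pos _ _ one_pos).ne' measure_closedBall_lt_top.ne

lemma integrable_comp_add_smul_ballUniform {f : E → ℝ} (hf : Continuous f) (x : E) (μ : ℝ) :
    Integrable (fun u => f (x + μ • u)) (ballUniform d) := by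
  rw [ballUniform_eq_cond]
  refine Integrable.smul_measure ?_ (ENNReal.inv_ne_top.2 (measure_closedBall_pos _ _ one_pos).ne')
  exact (hf.comp (by fun_prop)).continuousOn.integrableOn_compact (isCompact_closedBall _ _)

lemma abs_smoothed_sub_le {C : NNReal} {f : E → ℝ} (hf : LipschitzWith C f) {μ : ℝ} (hμ : 0 ≤ μ)
    (x : E) : |smoothed d f μ x - f x| ≤ C * μ := by
  have hint := integrable_comp_add_smul_ballUniform hf.continuous x μ
  have hbound : ∀ᵐ u ∂(ballUniform d), ‖f (x + μ • u) - f x‖ ≤ C * μ := by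
    rw [ballUniform_eq_cond]
    filter_upwards [ProbabilityTheory.ae_cond_mem measurableSet_closedBall] with u hu
    calc ‖f (x + μ • u) - f x‖ ≤ C * ‖(x + μ • u) - x‖ := hf.norm_sub_le _ _
      _ = C * (μ * ‖u‖) := by rw [add_sub_cancel_left, norm_smul, Real.norm_of_nonneg hμ]
      _ ≤ C * μ := by
        gcongr
        exact mul_le_of_le_one_right hμ (mem_closedBall_zero_iff.1 hu)
  have := norm_integral_le_of_norm_le_const hbound
  rw [integral_sub hint (integrable_const _), integral_const, probReal_univ, one_smul,
    mul_one] at this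
  simpa [smoothed, Real.norm_eq_abs] using this

lemma convexOn_smoothed {f : E → ℝ} (hf : Continuous f) (hconv : ConvexOn ℝ Set.univ f) (μ : ℝ) :
    ConvexOn ℝ Set.univ (smoothed d f μ) := by
  refine ⟨convex_univ, fun x _ y _ a b ha hb hab => ?_⟩
  have hx := integrable_comp_add_smul_ballUniform hf x μ
  have hy := integrable_comp_add_smul_ballUniform hf y μ
  have hpointwise : ∀ u : E,
      f (a • x + b • y + μ • u) ≤ a * f (x + μ • u) + b * f (y + μ • u) := fun u => by
    have : a • x + b • y + μ • u = a • (x + μ • u) + b • (y + μ • u) := by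
      rw [smul_add, smul_add, add_add_add_comm, ← add_smul, hab, one_smul]
    rw [this]
    exact hconv.2 trivial trivial ha hb hab
  calc smoothed d f μ (a • x + b • y)
      ≤ ∫ u, (a * f (x + μ • u) + b * f (y + μ • u)) ∂(ballUniform d) :=
        integral_mono (integrable_comp_add_smul_ballUniform hf _ μ)
          ((hx.const_mul a).add (hy.const_mul b)) hpointwise
    _ = a • smoothed d f μ x + b • smoothed d f μ y := by
        rw [integral_add (hx.const_mul a) (hy.const_mul b), integral_const_mul,
          integral_const_mul]
        rfl

lemma differentiableAt_smoothed {C : NNReal} {f : E → ℝ} (hf : LipschitzWith C f) {μ : ℝ}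
    (hμ : μ ≠ 0) (x₀ : E) : DifferentiableAt ℝ (smoothed d f μ) x₀ := by
  have hshift : Continuous fun u : E => x₀ + μ • u := by fun_prop
  -- Rademacher: `f` is differentiable a.e., and `u ↦ x₀ + μ • u` preserves null sets.
  have hdiff : ∀ᵐ u ∂(volume : Measure E), DifferentiableAt ℝ f (x₀ + μ • u) := by
    have hN := hf.ae_differentiableAt (μ := (volume : Measure E))
    rw [ae_iff] at hN ⊢
    change volume ((μ • ·) ⁻¹' ((x₀ + ·) ⁻¹' {v : E | ¬ DifferentiableAt ℝ f v})) = 0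
    rw [Measure.addHaar_preimage_smul volume hμ, measure_preimage_add, hN, mul_zero]
  have hderiv : ∀ᵐ u ∂(ballUniform d),
      HasFDerivAt (fun x => f (x + μ • u)) (fderiv ℝ f (x₀ + μ • u)) x₀ := by
    rw [ballUniform_eq_cond]
    filter_upwards [ProbabilityTheory.cond_absolutelyContinuous.ae_le hdiff] with u hu
    simpa [Function.comp_def] using hu.hasFDerivAt.comp x₀ ((hasFDerivAt_id x₀).add_const (μ • u))
  have hlip : ∀ᵐ u ∂(ballUniform d),
      LipschitzOnWith (Real.nnabs C) (fun x => f (x + μ • u)) (ball x₀ 1) :=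
    .of_forall fun u => by
      simpa [Function.comp_def] using
        (hf.comp (IsometryEquiv.addRight (μ • u)).isometry.lipschitz).lipschitzOnWith
  exact (hasFDerivAt_integral_of_dominated_loc_of_lip (ball_mem_nhds x₀ one_pos)
    (.of_forall fun x => (hf.continuous.comp (by fun_prop)).aestronglyMeasurable)
    (integrable_comp_add_smul_ballUniform hf.continuous x₀ μ)
    ((measurable_fderiv ℝ f).comp hshift.measurable).aestronglyMeasurable
    hlip (integrable_const _) hderiv).2.differentiableAt

lemma sub_le_inner_gradient_smoothed_add {C : NNReal} {f : E → ℝ} (hf : LipschitzWith C f)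
    (hconv : ConvexOn ℝ Set.univ f) {μ : ℝ} (hμ : 0 < μ) (x y : E) :
    f x - f y ≤ ⟪gradient (smoothed d f μ) x, x - y⟫ + 2 * C * μ := by
  have hx := abs_le.1 (abs_smoothed_sub_le hf hμ.le x)
  have hy := abs_le.1 (abs_smoothed_sub_le hf hμ.le y)
  have hgrad := (convexOn_smoothed hf.continuous hconv μ).sub_le_inner_gradient
    (differentiableAt_smoothed hf hμ.ne' x) y
  linarith [hx.1, hy.2]

lemma sum_mul_sub_le_sum_inner_gradient_smoothed {ι : Type*} {s : Finset ι} {C : NNReal}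
    {f : E → ℝ} (hf : LipschitzWith C f) (hconv : ConvexOn ℝ Set.univ f) {x : ι → E} {w : E}
    {r μ : ι → ℝ} (hr : ∀ i ∈ s, 0 ≤ r i) (hμ : ∀ i ∈ s, 0 < μ i) :
    ∑ i ∈ s, r i * (f (x i) - f w) ≤
      ∑ i ∈ s, r i * ⟪gradient (smoothed d f (μ i)) (x i), x i - w⟫ +
        2 * C * ∑ i ∈ s, r i * μ i := by
  rw [mul_sum, ← sum_add_distrib]
  refine sum_le_sum fun i hi => ?_
  have := mul_le_mul_of_nonneg_left
    (sub_le_inner_gradient_smoothed_add hf hconv (hμ i hi) (x i) w) (hr i hi)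
  linarith

end Smoothing

lemma partialSups_norm_sub_le {V : Type*} [SeminormedAddCommGroup V] {x : ℕ → V} {w : V}
    {r : ℕ → ℝ} (hr : Monotone r) (hxr : ∀ k, ‖x k - x 0‖ ≤ r k) (n : ℕ) :
    partialSups (fun j => ‖x j - w‖) n ≤ r n + ‖x 0 - w‖ :=
  partialSups_le _ _ _ fun j hj => (norm_sub_le_norm_sub_add_norm_sub _ (x 0) _).trans
    (by gcongr; exact (hxr j).trans (hr hj))

section DistanceOverGradients

variable {F : Type*} [NormedAddCommGroup F] [InnerProductSpace ℝ F]

lemma sum_mul_inner_le_of_step {x g : ℕ → F} {w : F} {r G : ℕ → ℝ} {s : ℝ} (n : ℕ)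
    (hr0 : ∀ k, 0 ≤ r k) (hr : Monotone r)
    (hG : ∀ k, G k = ∑ i ∈ range (k + 1), ‖g i‖ ^ 2) (hg0 : g 0 ≠ 0)
    (hstep : ∀ k, ‖x (k + 1) - w‖ ≤ ‖x k - (r k / √(G k)) • g k - w‖)
    (hs : ∀ k ≤ n, ‖x k - w‖ ≤ s) :
    ∑ k ∈ range (n + 1), r k * ⟪g k, x k - w⟫ ≤
      √(G n) * ((s ^ 2 - ‖x (n + 1) - w‖ ^ 2) / 2 + r n ^ 2) := by
  have hG_pos : ∀ k, 0 < G k := fun k => by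
    rw [hG]
    exact (pow_pos (norm_pos_iff.2 hg0) 2).trans_le
      (single_le_sum (fun i _ => sq_nonneg ‖g i‖) (mem_range.2 k.succ_pos))
  have hG_mono : Monotone G := fun j k hjk => by
    simp only [hG]
    exact sum_le_sum_of_subset_of_nonneg (range_subset_range.2 (by omega))
      fun i _ _ => sq_nonneg _
  have hdist : ∑ k ∈ range (n + 1), √(G k) * (‖x k - w‖ ^ 2 - ‖x (k + 1) - w‖ ^ 2) ≤
      √(G n) * (s ^ 2 - ‖x (n + 1) - w‖ ^ 2) :=
    sum_range_mul_sub_succ_le (fun j k hjk => sqrt_le_sqrt (hG_mono hjk)) (sqrt_nonneg _) n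
      fun k hk => pow_le_pow_left₀ (norm_nonneg _) (hs k hk) 2
  have hgrad : ∑ k ∈ range (n + 1), r k ^ 2 / √(G k) * ‖g k‖ ^ 2 ≤ 2 * r n ^ 2 * √(G n) :=
    calc ∑ k ∈ range (n + 1), r k ^ 2 / √(G k) * ‖g k‖ ^ 2
        ≤ ∑ k ∈ range (n + 1), r n ^ 2 * (‖g k‖ ^ 2 / √(G k)) := sum_le_sum fun k hk => by
          rw [div_mul_eq_mul_div, mul_div_assoc]
          gcongr
          exacts [hr0 k, hr (Nat.lt_succ_iff.1 (mem_range.1 hk))]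
      _ ≤ r n ^ 2 * (2 * √(G n)) := by
          rw [← mul_sum]
          gcongr
          simpa only [hG] using sum_div_sqrt_partialSum_le (fun i => sq_nonneg ‖g i‖) (n + 1)
      _ = 2 * r n ^ 2 * √(G n) := by ring
  calc ∑ k ∈ range (n + 1), r k * ⟪g k, x k - w⟫
      ≤ ∑ k ∈ range (n + 1), (√(G k) * (‖x k - w‖ ^ 2 - ‖x (k + 1) - w‖ ^ 2) / 2 +
          r k ^ 2 / √(G k) * ‖g k‖ ^ 2 / 2) :=
        sum_le_sum fun k _ => mul_inner_le_of_norm_sub_le (sqrt_pos.2 (hG_pos k)) (hstep k)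
    _ = (∑ k ∈ range (n + 1), √(G k) * (‖x k - w‖ ^ 2 - ‖x (k + 1) - w‖ ^ 2)) / 2 +
          (∑ k ∈ range (n + 1), r k ^ 2 / √(G k) * ‖g k‖ ^ 2) / 2 := by
        rw [sum_add_distrib, sum_div, sum_div]
    _ ≤ _ := by linarith

lemma sum_mul_inner_le_of_step_of_dist_le {x g : ℕ → F} {w : F} {r G : ℕ → ℝ} (n : ℕ)
    (hr0 : ∀ k, 0 ≤ r k) (hr : Monotone r) (hxr : ∀ k, ‖x k - x 0‖ ≤ r k)
    (hG : ∀ k, G k = ∑ i ∈ range (k + 1), ‖g i‖ ^ 2) (hg0 : g 0 ≠ 0)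
    (hstep : ∀ k, ‖x (k + 1) - w‖ ≤ ‖x k - (r k / √(G k)) • g k - w‖) :
    ∑ k ∈ range (n + 1), r k * ⟪g k, x k - w⟫ ≤
      3 * √(G n) * (r (n + 1) * (r (n + 1) + ‖x 0 - w‖)) := by
  set R := r (n + 1)
  set a₀ := ‖x 0 - w‖
  have hnear : ∀ k ≤ n + 1, ‖x k - w‖ ≤ R + a₀ := fun k hk =>
    (norm_sub_le_norm_sub_add_norm_sub (x k) (x 0) w).trans
      (by gcongr; exact (hxr k).trans (hr hk))
  have hlast : a₀ ≤ ‖x (n + 1) - w‖ + R := by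
    have := norm_sub_le_norm_sub_add_norm_sub (x 0) (x (n + 1)) w
    rw [norm_sub_rev (x 0) (x (n + 1))] at this
    linarith [hxr (n + 1)]
  have hbracket : ((R + a₀) ^ 2 - ‖x (n + 1) - w‖ ^ 2) / 2 + r n ^ 2 ≤ 3 * (R * (R + a₀)) := by
    nlinarith [hnear (n + 1) le_rfl, norm_nonneg (x (n + 1) - w), hr0 n, hr n.le_succ,
      norm_nonneg (x 0 - w)]
  calc ∑ k ∈ range (n + 1), r k * ⟪g k, x k - w⟫
      ≤ √(G n) * (((R + a₀) ^ 2 - ‖x (n + 1) - w‖ ^ 2) / 2 + r n ^ 2) :=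
        sum_mul_inner_le_of_step n hr0 hr hG hg0 hstep fun k hk => hnear k (by omega)
    _ ≤ √(G n) * (3 * (R * (R + a₀))) := by gcongr
    _ = 3 * √(G n) * (R * (R + a₀)) := by ring

lemma sum_mul_inner_le_of_abs_le {x Δ : ℕ → F} {w : F} {r : ℕ → ℝ} {θ G c : ℝ} (n : ℕ)
    (hθ : 1 ≤ θ) (hG : 0 ≤ G) (hc : 0 ≤ c) (hr0 : ∀ k, 0 ≤ r k) (hr : Monotone r)
    (hxr : ∀ k, ‖x k - x 0‖ ≤ r k)
    (hnoise : |∑ k ∈ range (n + 1), r k * ⟪Δ k, x k - w⟫| ≤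
      8 * r n * partialSups (fun j => ‖x j - w‖) n * √(θ * G + 4 * c ^ 2 * θ ^ 2)) :
    ∑ k ∈ range (n + 1), r k * ⟪Δ k, x k - w⟫ ≤
      8 * θ * (√G + 2 * c) * (r (n + 1) * (r (n + 1) + ‖x 0 - w‖)) := by
  have hs0 : 0 ≤ partialSups (fun j => ‖x j - w‖) n :=
    (norm_nonneg _).trans (le_partialSups_of_le (fun j => ‖x j - w‖) n.zero_le)
  have hrs : r n * partialSups (fun j => ‖x j - w‖) n ≤ r (n + 1) * (r (n + 1) + ‖x 0 - w‖) :=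
    mul_le_mul (hr n.le_succ)
      ((partialSups_norm_sub_le hr hxr n).trans (by gcongr; exact hr n.le_succ)) hs0 (hr0 _)
  have hsqrt := sqrt_mul_add_sq_mul_sq_le hθ hG (mul_nonneg zero_le_two hc)
  calc _ ≤ _ := le_abs_self _
    _ ≤ _ := hnoise
    _ ≤ 8 * (r (n + 1) * (r (n + 1) + ‖x 0 - w‖)) * (θ * (√G + 2 * c)) := by
        rw [mul_assoc 8, show 4 * c ^ 2 * θ ^ 2 = (2 * c) ^ 2 * θ ^ 2 by ring]
        have hD : 0 ≤ r (n + 1) * (r (n + 1) + ‖x 0 - w‖) :=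
          mul_nonneg (hr0 _) (add_nonneg (hr0 _) (norm_nonneg _))
        exact mul_le_mul (by linarith) hsqrt (sqrt_nonneg _) (by positivity)
    _ = _ := by ring

end DistanceOverGradients

lemma sum_mul_sub_le_of_smoothed_step {d : ℕ} {C : NNReal} {f : EuclideanSpace ℝ (Fin d) → ℝ}
    (hf : LipschitzWith C f) (hconv : ConvexOn ℝ Set.univ f)
    {x g : ℕ → EuclideanSpace ℝ (Fin d)} {w : EuclideanSpace ℝ (Fin d)} {r G μ : ℕ → ℝ}
    {θ : ℝ} (n : ℕ) (hθ : 1 ≤ θ) (hr0 : ∀ k, 0 < r k) (hr : Monotone r)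
    (hxr : ∀ k, ‖x k - x 0‖ ≤ r k)
    (hG : ∀ k, G k = ∑ i ∈ range (k + 1), ‖g i‖ ^ 2) (hg0 : g 0 ≠ 0)
    (hstep : ∀ k, ‖x (k + 1) - w‖ ≤ ‖x k - (r k / √(G k)) • g k - w‖)
    (hμ : ∀ k : ℕ, μ k = r k * √((d : ℝ) / (k + 1))) (hμ0 : ∀ k, 0 < μ k)
    (hnoise : |∑ k ∈ range (n + 1),
        r k * ⟪gradient (smoothed d f (μ k)) (x k) - g k, x k - w⟫| ≤
      8 * r n * partialSups (fun j => ‖x j - w‖) n *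
        √(θ * G n + 4 * C ^ 2 * (d : ℝ) ^ 2 * θ ^ 2)) :
    ∑ k ∈ range (n + 1), r k * (f (x k) - f w) ≤
      16 * θ * (r (n + 1) + ‖x 0 - w‖) *
        (√(G n) + C * d + C * √((d : ℝ) * (n + 1 : ℕ))) * r (n + 1) := by
  set D := r (n + 1) * (r (n + 1) + ‖x 0 - w‖)
  have hD : 0 ≤ D := mul_nonneg (hr0 _).le (add_nonneg (hr0 _).le (norm_nonneg _))
  have hsplit : ∑ k ∈ range (n + 1), r k * ⟪gradient (smoothed d f (μ k)) (x k), x k - w⟫ =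
      ∑ k ∈ range (n + 1), r k * ⟪g k, x k - w⟫ +
        ∑ k ∈ range (n + 1), r k * ⟪gradient (smoothed d f (μ k)) (x k) - g k, x k - w⟫ := by
    rw [← sum_add_distrib]
    exact sum_congr rfl fun k _ => by rw [inner_sub_left]; ring
  have hT1 := sum_mul_inner_le_of_step_of_dist_le n (fun k => (hr0 k).le) hr hxr hG hg0 hstep
  have hT2 := sum_mul_inner_le_of_abs_le n hθ (hG n ▸ sum_nonneg fun i _ => sq_nonneg ‖g i‖)
    (by positivity : (0 : ℝ) ≤ C * d) (fun k => (hr0 k).le) hr hxr (hnoise.trans_eq (by ring_nf))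
  have hT3 : ∑ k ∈ range (n + 1), r k * μ k ≤ 2 * √((d : ℝ) * (n + 1 : ℕ)) * D :=
    calc ∑ k ∈ range (n + 1), r k * μ k
        = ∑ k ∈ range (n + 1), r k * (r k * √((d : ℝ) / (k + 1))) :=
          sum_congr rfl fun k _ => by rw [hμ]
      _ ≤ 2 * √((d : ℝ) * (n + 1 : ℕ)) * r (n + 1) ^ 2 :=
          sum_mul_mul_sqrt_div_le (Nat.cast_nonneg d) (n + 1) fun k hk => ⟨(hr0 k).le, hr hk.le⟩
      _ ≤ 2 * √((d : ℝ) * (n + 1 : ℕ)) * D := by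
          gcongr
          nlinarith [(hr0 (n + 1)).le, norm_nonneg (x 0 - w)]
  have hcoef : 3 * √(G n) + 8 * θ * (√(G n) + 2 * (C * d)) +
      2 * C * (2 * √((d : ℝ) * (n + 1 : ℕ))) ≤
        16 * θ * (√(G n) + C * d + C * √((d : ℝ) * (n + 1 : ℕ))) := by
    have hCq := mul_nonneg C.coe_nonneg (sqrt_nonneg ((d : ℝ) * (n + 1 : ℕ)))
    nlinarith [mul_nonneg (sub_nonneg.2 hθ) (sqrt_nonneg (G n)), sqrt_nonneg (G n),
      mul_nonneg (sub_nonneg.2 hθ) hCq]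
  calc ∑ k ∈ range (n + 1), r k * (f (x k) - f w)
      ≤ ∑ k ∈ range (n + 1), r k * ⟪gradient (smoothed d f (μ k)) (x k), x k - w⟫ +
          2 * C * ∑ k ∈ range (n + 1), r k * μ k :=
        sum_mul_sub_le_sum_inner_gradient_smoothed hf hconv (fun k _ => (hr0 k).le)
          fun k _ => hμ0 k
    _ ≤ (3 * √(G n) + 8 * θ * (√(G n) + 2 * (C * d)) +
          2 * C * (2 * √((d : ℝ) * (n + 1 : ℕ)))) * D := by
        have := mul_le_mul_of_nonneg_left hT3 (by positivity : (0 : ℝ) ≤ 2 * C)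
        linarith
    _ ≤ 16 * θ * (√(G n) + C * d + C * √((d : ℝ) * (n + 1 : ℕ))) * D := by gcongr
    _ = _ := by ring

theorem stmt9_general (d : ℕ) (hd : 1 ≤ d) (L : ℝ) (hL : 0 < L) (θ : ℝ) (hθ : 1 ≤ θ)
    (X : Set (EuclideanSpace ℝ (Fin d)))
    (hXconv : Convex ℝ X)
    (f : EuclideanSpace ℝ (Fin d) → ℝ)
    (hconv : ConvexOn ℝ Set.univ f)
    (hlip : ∀ x y, |f x - f y| ≤ L * ‖x - y‖)
    -- `proj` is the Euclidean metric projection onto `X`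
    (proj : EuclideanSpace ℝ (Fin d) → EuclideanSpace ℝ (Fin d))
    (hprojMem : ∀ z, proj z ∈ X)
    (hprojMin : ∀ z, ∀ y ∈ X, ‖z - proj z‖ ≤ ‖z - y‖)
    (x : ℕ → EuclideanSpace ℝ (Fin d)) (xstar : EuclideanSpace ℝ (Fin d))
    (hxstar : xstar ∈ X)
    (reps : ℝ) (hreps : 0 < reps)
    (g : ℕ → EuclideanSpace ℝ (Fin d)) (hg0 : g 0 ≠ 0)
    (rbar : ℕ → ℝ)
    (hrbar : ∀ k, rbar k = max reps ((Finset.range (k + 1)).sup' Finset.nonempty_range_add_one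
      fun j => ‖x j - x 0‖))
    (G : ℕ → ℝ) (hG : ∀ k, G k = ∑ i ∈ Finset.range (k + 1), ‖g i‖ ^ 2)
    (η : ℕ → ℝ) (hη : ∀ k, η k = rbar k / Real.sqrt (G k))
    (μ : ℕ → ℝ) (hμ : ∀ k : ℕ, μ k = rbar k * Real.sqrt ((d : ℝ) / (k + 1)))
    (hrec : ∀ k, x (k + 1) = proj (x k - η k • g k))
    (sbar : ℕ → ℝ)
    (hsbar : ∀ k, sbar k = (Finset.range (k + 1)).sup' Finset.nonempty_range_add_one
      fun j => ‖x j - xstar‖)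
    (t : ℕ) (ht : 1 ≤ t)
    (xbar : EuclideanSpace ℝ (Fin d))
    (hxbar : xbar = (∑ k ∈ Finset.range t, rbar k)⁻¹ •
      ∑ k ∈ Finset.range t, rbar k • x k)
    (hnoise : |∑ k ∈ Finset.range t,
        rbar k * ⟪gradient (smoothed d f (μ k)) (x k) - g k, x k - xstar⟫| ≤
      8 * rbar (t - 1) * sbar (t - 1) *
        Real.sqrt (θ * G (t - 1) + 4 * L ^ 2 * (d : ℝ) ^ 2 * θ ^ 2)) :
    f xbar - f xstar ≤
      16 * θ * (rbar t + ‖x 0 - xstar‖) *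
        (Real.sqrt (G (t - 1)) + L * d + L * Real.sqrt ((d : ℝ) * t)) /
      (∑ k ∈ Finset.range t, rbar k / rbar t) := by
  obtain ⟨n, rfl⟩ : ∃ n, t = n + 1 := ⟨t - 1, by omega⟩
  rw [Nat.add_sub_cancel] at hnoise ⊢
  lift L to NNReal using hL.le
  simp only [← partialSups_eq_sup'_range] at hrbar hsbar
  rw [hsbar] at hnoise
  have hr_pos : ∀ k, 0 < rbar k := fun k => hrbar k ▸ lt_max_of_lt_left hreps
  have hr_mono : Monotone rbar := fun j k hjk => by
    simpa only [hrbar] using max_le_max le_rfl ((partialSups _).monotone hjk)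
  have hxr : ∀ k, ‖x k - x 0‖ ≤ rbar k := fun k => by
    simpa only [hrbar] using le_max_of_le_right (le_partialSups_of_le (fun j => ‖x j - x 0‖) le_rfl)
  have hstep : ∀ k, ‖x (k + 1) - xstar‖ ≤ ‖x k - (rbar k / √(G k)) • g k - xstar‖ := fun k => by
    rw [hrec, ← hη]
    exact hXconv.norm_sub_le_of_nearest (hprojMem _) (hprojMin _) hxstar
  have hμ_pos : ∀ k, 0 < μ k := fun k =>
    hμ k ▸ mul_pos (hr_pos k) (sqrt_pos.2 (div_pos (Nat.cast_pos.2 hd) (by positivity)))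
  have hf : LipschitzWith L f :=
    .of_dist_le_mul fun a b => by simpa only [dist_eq_norm, Real.norm_eq_abs] using hlip a b
  rw [hxbar]
  exact hconv.map_centerMass_sub_le_div (fun k _ => hr_pos k) nonempty_range_add_one
    (sum_mul_sub_le_of_smoothed_step hf hconv n hθ hr_pos hr_mono hxr hG hg0 hstep hμ hμ_pos hnoise)

theorem stmt9 (d : ℕ) (hd : 1 ≤ d) (L : ℝ) (hL : 0 < L) (θ : ℝ) (hθ : 1 ≤ θ)
    (X : Set (EuclideanSpace ℝ (Fin d))) (hXne : X.Nonempty) (hXcl : IsClosed X)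
    (hXconv : Convex ℝ X)
    (f : EuclideanSpace ℝ (Fin d) → ℝ)
    (hconv : ConvexOn ℝ Set.univ f)
    (hlip : ∀ x y, |f x - f y| ≤ L * ‖x - y‖)
    -- `proj` is the Euclidean metric projection onto `X`
    (proj : EuclideanSpace ℝ (Fin d) → EuclideanSpace ℝ (Fin d))
    (hprojMem : ∀ z, proj z ∈ X)
    (hprojMin : ∀ z, ∀ y ∈ X, ‖z - proj z‖ ≤ ‖z - y‖)
    (x : ℕ → EuclideanSpace ℝ (Fin d)) (xstar : EuclideanSpace ℝ (Fin d))
    (hx0 : x 0 ∈ X) (hxstar : xstar ∈ X)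
    (reps : ℝ) (hreps : 0 < reps)
    (g : ℕ → EuclideanSpace ℝ (Fin d)) (hg0 : g 0 ≠ 0)
    (hgbdd : ∀ k, ‖g k‖ ≤ L * d)
    (rbar : ℕ → ℝ)
    (hrbar : ∀ k, rbar k = max reps ((Finset.range (k + 1)).sup' Finset.nonempty_range_add_one
      fun j => ‖x j - x 0‖))
    (G : ℕ → ℝ) (hG : ∀ k, G k = ∑ i ∈ Finset.range (k + 1), ‖g i‖ ^ 2)
    (η : ℕ → ℝ) (hη : ∀ k, η k = rbar k / Real.sqrt (G k))
    (μ : ℕ → ℝ) (hμ : ∀ k : ℕ, μ k = rbar k * Real.sqrt ((d : ℝ) / (k + 1)))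
    (hrec : ∀ k, x (k + 1) = proj (x k - η k • g k))
    (sbar : ℕ → ℝ)
    (hsbar : ∀ k, sbar k = (Finset.range (k + 1)).sup' Finset.nonempty_range_add_one
      fun j => ‖x j - xstar‖)
    (t : ℕ) (ht : 1 ≤ t)
    (xbar : EuclideanSpace ℝ (Fin d))
    (hxbar : xbar = (∑ k ∈ Finset.range t, rbar k)⁻¹ •
      ∑ k ∈ Finset.range t, rbar k • x k)
    (hnoise : |∑ k ∈ Finset.range t,
        rbar k * ⟪gradient (smoothed d f (μ k)) (x k) - g k, x k - xstar⟫| ≤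
      8 * rbar (t - 1) * sbar (t - 1) *
        Real.sqrt (θ * G (t - 1) + 4 * L ^ 2 * (d : ℝ) ^ 2 * θ ^ 2)) :
    f xbar - f xstar ≤
      16 * θ * (rbar t + ‖x 0 - xstar‖) *
        (Real.sqrt (G (t - 1)) + L * d + L * Real.sqrt ((d : ℝ) * t)) /
      (∑ k ∈ Finset.range t, rbar k / rbar t) :=
  stmt9_general d hd L hL θ hθ X hXconv f hconv hlip proj hprojMem hprojMin x xstar hxstar reps
    hreps g hg0 rbar hrbar G hG η hη μ hμ hrec sbar hsbar t ht xbar hxbar hnoise
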